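/- arXiv:math/0501256 — 6 statements merged into one kernel-verified Lean document; each statement's English description precedes it below -/
import Mathlib

section
/- (Theorem 1.) Let p₁ = (t₁,x₁), …, p_k = (t_k,x_k) be k pairwise spacelike separated events in ℝ × ℝⁿ (so in particular x_i ≠ x_j for i ≠ j, and each H_{ij} is an affine hyperplane). Then the number O(p₁,…,p_k) of achievable orders equals the number of connected components of ℝⁿ ∖ ⋃_{i<j} H_{ij} that contain a point v with ‖v‖ < 1. More precisely, the induced ordering of the values t_i - ⟪x_i,v⟫ is constant as v ranges over any fixed connected component, and this assignment gives a bijection between the connected components containing a point of the open unit ball and the achievable orders. -/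
/-!
Off the hyperplanes `H_{ij}` the observed times `v ↦ t i - ⟪x i, v⟫` are pairwise distinct, so by
the intermediate value theorem each comparison `obsTime v i < obsTime v j` is constant on a
connected component, and with it the sorting permutation of the observed times. Conversely, the
velocities inducing a fixed order form an intersection of open half-spaces: a convex set avoiding
all `H_{ij}`, hence lying in a single component. Thus "same component" and "same sorting
permutation" are the same equivalence relation on the good velocities of the unit ball, and the two
quotients — the components meeting the ball and the achievable orders — are in bijection.
-/

open scoped InnerProductSpace

noncomputable section

/-- The time at which the event `(t i, x i)` is observed (up to the positive
factor `γ`) in the frame moving with velocity `v`. -/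
def obsTime {n k : ℕ} (t : Fin k → ℝ) (x : Fin k → EuclideanSpace ℝ (Fin n))
    (v : EuclideanSpace ℝ (Fin n)) (i : Fin k) : ℝ :=
  t i - ⟪x i, v⟫_ℝ

/-- A permutation `π` is an achievable order of the events `(t i, x i)` if some
observer with velocity `‖v‖ < 1` sees the events in the order
`π 0, π 1, …, π (k-1)`. -/
def Achievable {n k : ℕ} (t : Fin k → ℝ) (x : Fin k → EuclideanSpace ℝ (Fin n))
    (π : Equiv.Perm (Fin k)) : Prop :=
  ∃ v : EuclideanSpace ℝ (Fin n), ‖v‖ < 1 ∧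
    StrictMono fun m : Fin k => obsTime t x v (π m)

/-- The complement `ℝⁿ ∖ ⋃_{i<j} H_{ij}` of the union of the hyperplanes
`H_{ij} = {v : t i - t j = ⟪x i - x j, v⟫}`. -/
def goodRegion {n k : ℕ} (t : Fin k → ℝ) (x : Fin k → EuclideanSpace ℝ (Fin n)) :
    Set (EuclideanSpace ℝ (Fin n)) :=
  {v | ∀ i j : Fin k, i ≠ j → t i - t j ≠ ⟪x i - x j, v⟫_ℝ}

/-- The connected components of `ℝⁿ ∖ ⋃_{i<j} H_{ij}` that contain a point `v`
with `‖v‖ < 1`. -/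
def ballComponents {n k : ℕ} (t : Fin k → ℝ) (x : Fin k → EuclideanSpace ℝ (Fin n)) :
    Set (Set (EuclideanSpace ℝ (Fin n))) :=
  {C | ∃ v, ‖v‖ < 1 ∧ v ∈ goodRegion t x ∧
    C = connectedComponentIn (goodRegion t x) v}

theorem IsPreconnected.lt_iff_lt_of_forall_ne {X : Type*} [TopologicalSpace X] {S : Set X}
    (hS : IsPreconnected S) {f g : X → ℝ} (hf : ContinuousOn f S) (hg : ContinuousOn g S)
    (hne : ∀ u ∈ S, f u ≠ g u) {v w : X} (hv : v ∈ S) (hw : w ∈ S) :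
    f v < g v ↔ f w < g w := by
  have key : ∀ a ∈ S, ∀ b ∈ S, f a < g a → f b < g b := by
    intro a ha b hb hab
    by_contra! hba
    obtain ⟨u, hu, hfg⟩ := hS.intermediate_value₂ ha hb hf hg hab.le hba
    exact hne u hu hfg
  exact ⟨key v hv w hw, key w hw v hv⟩

theorem Set.exists_equiv_image_of_eq_iff {α β γ : Type*} {S : Set α} {f : α → β} {g : α → γ}
    (h : ∀ a ∈ S, ∀ b ∈ S, f a = f b ↔ g a = g b) :
    ∃ e : f '' S ≃ g '' S, ∀ a (ha : a ∈ S), (e ⟨f a, mem_image_of_mem f ha⟩ : γ) = g a := by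
  choose r hrS hr using fun y : f '' S => y.2
  refine ⟨Equiv.ofBijective (fun y => ⟨g (r y), mem_image_of_mem g (hrS y)⟩) ⟨?_, ?_⟩,
    fun a ha => (h _ (hrS _) _ ha).1 (hr _)⟩
  · intro y₁ y₂ hy
    ext
    rw [← hr y₁, ← hr y₂]
    exact (h _ (hrS _) _ (hrS _)).2 (congrArg Subtype.val hy)
  · rintro ⟨_, a, ha, rfl⟩
    exact ⟨⟨f a, a, ha, rfl⟩, Subtype.ext ((h _ (hrS _) _ ha).1 (hr _))⟩

namespace Tuple

variable {α : Type*} [LinearOrder α] {k : ℕ} {f g : Fin k → α}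

theorem strictMono_comp_sort (hf : Function.Injective f) : StrictMono (f ∘ sort f) :=
  (monotone_sort f).strictMono_of_injective (hf.comp (sort f).injective)

theorem eq_sort_of_strictMono {σ : Equiv.Perm (Fin k)} (h : StrictMono (f ∘ σ)) : σ = sort f :=
  eq_sort_iff.2 ⟨h.monotone, fun _ _ hij hf => absurd hf (h hij).ne⟩

theorem lt_iff_lt_of_sort_eq (hf : Function.Injective f) (hg : Function.Injective g)
    (h : sort f = sort g) (i j : Fin k) : f i < f j ↔ g i < g j := by
  have hf' := strictMono_comp_sort hf
  rw [h] at hf'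
  simpa using (hf'.lt_iff_lt (a := (sort g).symm i) (b := (sort g).symm j)).trans
    (strictMono_comp_sort hg).lt_iff_lt.symm

end Tuple

section Observer

variable {n k : ℕ} {t : Fin k → ℝ} {x : Fin k → EuclideanSpace ℝ (Fin n)}
  {v w : EuclideanSpace ℝ (Fin n)}

theorem obsTime_sub_obsTime (v : EuclideanSpace ℝ (Fin n)) (i j : Fin k) :
    obsTime t x v i - obsTime t x v j = t i - t j - ⟪x i - x j, v⟫_ℝ := by
  simp only [obsTime, inner_sub_left]
  ring

theorem mem_goodRegion_iff_injective :
    v ∈ goodRegion t x ↔ Function.Injective (obsTime t x v) := by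
  refine ⟨fun hv i j hij => ?_, fun hinj i j hij hH => hij (hinj ?_)⟩
  · by_contra hne
    exact hv i j hne (by linarith [obsTime_sub_obsTime (t := t) (x := x) v i j])
  · linarith [obsTime_sub_obsTime (t := t) (x := x) v i j]

theorem continuous_obsTime (i : Fin k) :
    Continuous fun v : EuclideanSpace ℝ (Fin n) => obsTime t x v i :=
  continuous_const.sub (continuous_const.inner continuous_id)

theorem convex_setOf_obsTime_lt (i j : Fin k) :
    Convex ℝ {v : EuclideanSpace ℝ (Fin n) | obsTime t x v i < obsTime t x v j} := by
  have hset : {v : EuclideanSpace ℝ (Fin n) | obsTime t x v i < obsTime t x v j}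
      = {v | ⟪x j - x i, v⟫_ℝ < t j - t i} := by
    ext v
    simp only [Set.mem_ofPred_eq, obsTime, inner_sub_left]
    constructor <;> intro h <;> linarith
  rw [hset]
  exact convex_halfSpace_lt (innerₛₗ ℝ (x j - x i)).isLinear _

theorem obsTime_lt_obsTime_iff_of_mem_connectedComponentIn (hv : v ∈ goodRegion t x)
    (hw : w ∈ connectedComponentIn (goodRegion t x) v) (i j : Fin k) :
    obsTime t x v i < obsTime t x v j ↔ obsTime t x w i < obsTime t x w j := by
  rcases eq_or_ne i j with rfl | hij
  · simp
  exact isPreconnected_connectedComponentIn.lt_iff_lt_of_forall_ne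
    (continuous_obsTime i).continuousOn (continuous_obsTime j).continuousOn
    (fun u hu => (mem_goodRegion_iff_injective.1 (connectedComponentIn_subset _ _ hu)).ne hij)
    (mem_connectedComponentIn hv) hw

theorem convex_setOf_forall_obsTime_lt (v : EuclideanSpace ℝ (Fin n)) :
    Convex ℝ {u | ∀ i j, obsTime t x v i < obsTime t x v j → obsTime t x u i < obsTime t x u j} := by
  simpa only [Set.ofPred_forall] using convex_iInter fun i => convex_iInter fun j =>
    convex_iInter fun _ => convex_setOf_obsTime_lt (t := t) (x := x) i j

theorem mem_connectedComponentIn_of_obsTime_lt (hv : v ∈ goodRegion t x)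
    (h : ∀ i j, obsTime t x v i < obsTime t x v j → obsTime t x w i < obsTime t x w j) :
    w ∈ connectedComponentIn (goodRegion t x) v := by
  refine (convex_setOf_forall_obsTime_lt v).isPreconnected.subset_connectedComponentIn
    (fun _ _ => id) (fun u hu => ?_) h
  refine mem_goodRegion_iff_injective.2 fun i j hij => ?_
  by_contra hne
  rcases (mem_goodRegion_iff_injective.1 hv |>.ne hne).lt_or_gt with hlt | hgt
  · exact (hu i j hlt).ne hij
  · exact (hu j i hgt).ne' hij

theorem strictMono_obsTime_comp_sort (hv : v ∈ goodRegion t x)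
    (hw : w ∈ connectedComponentIn (goodRegion t x) v) :
    StrictMono (obsTime t x w ∘ Tuple.sort (obsTime t x v)) := fun _ _ hab =>
  (obsTime_lt_obsTime_iff_of_mem_connectedComponentIn hv hw _ _).1
    (Tuple.strictMono_comp_sort (mem_goodRegion_iff_injective.1 hv) hab)

theorem connectedComponentIn_eq_iff_sort_obsTime_eq (hv : v ∈ goodRegion t x)
    (hw : w ∈ goodRegion t x) :
    connectedComponentIn (goodRegion t x) v = connectedComponentIn (goodRegion t x) w ↔
      Tuple.sort (obsTime t x v) = Tuple.sort (obsTime t x w) := by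
  constructor
  · intro h
    have hw' : w ∈ connectedComponentIn (goodRegion t x) v := h ▸ mem_connectedComponentIn hw
    exact Tuple.eq_sort_of_strictMono (strictMono_obsTime_comp_sort hv hw')
  · intro h
    refine connectedComponentIn_eq (mem_connectedComponentIn_of_obsTime_lt hv fun i j => ?_)
    exact (Tuple.lt_iff_lt_of_sort_eq (mem_goodRegion_iff_injective.1 hv)
      (mem_goodRegion_iff_injective.1 hw) h i j).1

theorem ballComponents_eq_image : ballComponents t x =
    connectedComponentIn (goodRegion t x) '' {v | ‖v‖ < 1 ∧ v ∈ goodRegion t x} := by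
  ext C
  simp only [ballComponents, Set.mem_image, Set.mem_ofPred_eq, and_assoc, eq_comm]

theorem setOf_achievable_eq_image : {π | Achievable t x π} =
    (fun v => Tuple.sort (obsTime t x v)) '' {v | ‖v‖ < 1 ∧ v ∈ goodRegion t x} := by
  ext π
  constructor
  · rintro ⟨v, hv, hmono⟩
    have hgood : v ∈ goodRegion t x := mem_goodRegion_iff_injective.2
      (hmono.injective.of_comp_right π.surjective)
    exact ⟨v, ⟨hv, hgood⟩, (Tuple.eq_sort_of_strictMono hmono).symm⟩
  · rintro ⟨v, ⟨hv, hgood⟩, rfl⟩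
    exact ⟨v, hv, Tuple.strictMono_comp_sort (mem_goodRegion_iff_injective.1 hgood)⟩

end Observer

theorem number_of_orders_eq_number_of_regions_general
    (n k : ℕ) (t : Fin k → ℝ) (x : Fin k → EuclideanSpace ℝ (Fin n)) :
    (∀ v ∈ goodRegion t x, ∀ w ∈ connectedComponentIn (goodRegion t x) v,
        ∀ i j : Fin k, (obsTime t x v i < obsTime t x v j ↔
          obsTime t x w i < obsTime t x w j)) ∧
    Nat.card {π : Equiv.Perm (Fin k) // Achievable t x π}
      = Nat.card (ballComponents t x) ∧
    ∃ e : ballComponents t x ≃ {π : Equiv.Perm (Fin k) // Achievable t x π},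
      ∀ C : ballComponents t x, ∀ v ∈ (C : Set (EuclideanSpace ℝ (Fin n))),
        StrictMono fun m : Fin k => obsTime t x v (((e C) : Equiv.Perm (Fin k)) m) := by
  refine ⟨fun v hv w hw => obsTime_lt_obsTime_iff_of_mem_connectedComponentIn hv hw, ?_⟩
  obtain ⟨e, he⟩ := Set.exists_equiv_image_of_eq_iff (S := {v | ‖v‖ < 1 ∧ v ∈ goodRegion t x})
    fun v hv w hw => connectedComponentIn_eq_iff_sort_obsTime_eq hv.2 hw.2
  let e' : ballComponents t x ≃ {π : Equiv.Perm (Fin k) // Achievable t x π} :=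
    (Equiv.setCongr ballComponents_eq_image).trans
      (e.trans (Equiv.setCongr setOf_achievable_eq_image.symm))
  refine ⟨Nat.card_congr e'.symm, e', ?_⟩
  rintro ⟨_, v₀, hv₀, hgood, rfl⟩ v hv
  have he₀ : (e' ⟨_, v₀, hv₀, hgood, rfl⟩ : Equiv.Perm (Fin k))
      = Tuple.sort (obsTime t x v₀) := he v₀ ⟨hv₀, hgood⟩
  rw [he₀]
  exact strictMono_obsTime_comp_sort hgood hv

/-- **Theorem 1.** For `k` pairwise spacelike separated events, the induced
ordering of the observed times is constant on each connected component of the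
complement of the hyperplane arrangement; the number of achievable orders
equals the number of connected components meeting the open unit ball, the
bijection being given by this assignment. -/
theorem number_of_orders_eq_number_of_regions
    (n k : ℕ) (t : Fin k → ℝ) (x : Fin k → EuclideanSpace ℝ (Fin n))
    (hsep : ∀ i j : Fin k, i ≠ j → (t i - t j) ^ 2 < ‖x i - x j‖ ^ 2) :
    (∀ v ∈ goodRegion t x, ∀ w ∈ connectedComponentIn (goodRegion t x) v,
        ∀ i j : Fin k, (obsTime t x v i < obsTime t x v j ↔
          obsTime t x w i < obsTime t x w j)) ∧
    Nat.card {π : Equiv.Perm (Fin k) // Achievable t x π}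
      = Nat.card (ballComponents t x) ∧
    ∃ e : ballComponents t x ≃ {π : Equiv.Perm (Fin k) // Achievable t x π},
      ∀ C : ballComponents t x, ∀ v ∈ (C : Set (EuclideanSpace ℝ (Fin n))),
        StrictMono fun m : Fin k => obsTime t x v (((e C) : Equiv.Perm (Fin k)) m) :=
  number_of_orders_eq_number_of_regions_general n k t x
end
end

section
/- (Theorem 2, inequality part.) Let p₁,…,p_k be k pairwise spacelike separated events in ℝ × ℝⁿ. Then O(p₁,…,p_k) ≤ c(k,k) + c(k,k-1) + ⋯ + c(k,k-n), where c(k,i) is the number of permutations of a k-element set with exactly i cycles (and c(k,i) = 0 if i < 1 or i > k). -/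
open scoped InnerProductSpace

noncomputable section

/-- The number of cycles of a permutation of `Fin k` (fixed points count as
cycles of length one). -/
def cycleCount {k : ℕ} (σ : Equiv.Perm (Fin k)) : ℕ :=
  Multiset.card σ.cycleType + (k - σ.support.card)

/-- The signless Stirling number of the first kind `c(k, i)`: the number of
permutations of a `k`-element set with exactly `i` cycles. -/
def stirlingFirst (k i : ℕ) : ℕ :=
  Nat.card {σ : Equiv.Perm (Fin k) // cycleCount σ = i}

/-!
The observer with velocity `v` orders the events by the values at `v` of the affine functions
`v ↦ t i - ⟪x i, v⟫`, so it suffices to show that `k` affine functions on a `d`-dimensional real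
affine space realize at most `R(k, d) = c(k,k) + ⋯ + c(k,k-d)` orders. Induct on `k`: deleting the
last function sends every realized order onto a realized order `σ` of the others. Of the positions
of the last function that are realized inside `σ`, each one but the lowest comes right after an
event `i` whose hyperplane `f i = f last` cuts the region of `σ`, and on that hyperplane at most
`R(k, d - 1)` orders are realized. Hence at most `R(k, d) + k R(k, d - 1) = R(k + 1, d)` orders,
the identity being the recurrence `c(k+1, j+1) = c(k, j) + k c(k, j+1)`. That recurrence holds
for the cycle count because `Perm.decomposeFin` writes a permutation of `Fin (k+1)` as
`swap 0 p * σ'` with `σ'` fixing `0` and acting as `σ` elsewhere, which has one cycle more than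
`σ` if `p = 0` and as many otherwise.
-/

open Equiv Finset Module

namespace Equiv.Perm

variable {α : Type*} [Fintype α] [DecidableEq α]

theorem card_support_swap_mul_add_one {f : Perm α} {x : α} (hx : f x ≠ x) (hffx : f (f x) ≠ x) :
    #(swap x (f x) * f).support + 1 = #f.support := by
  have hmem : x ∈ f.support := mem_support.2 hx
  rw [support_swap_mul_eq f x hffx, card_sdiff_of_subset (singleton_subset_iff.2 hmem),
    card_singleton, Nat.sub_add_cancel (card_pos.2 ⟨x, hmem⟩)]

theorem card_cycleType_swap_mul {f : Perm α} {x : α} (hx : f x ≠ x) (hffx : f (f x) ≠ x) :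
    Multiset.card (swap x (f x) * f).cycleType = Multiset.card f.cycleType := by
  set c := f.cycleOf x
  have hcx : c x = f x := cycleOf_apply_self f x
  have hc : c.IsCycle := f.isCycle_cycleOf hx
  have hccx : c (c x) ≠ x := by rwa [hcx, cycleOf_apply_apply_self]
  have hc' : (swap x (c x) * c).IsCycle := hc.swap_mul (hcx ▸ hx) hccx
  set ρ := f * c⁻¹
  have hρc : ρ.Disjoint c := disjoint_mul_inv_of_mem_cycleFactorsFinset
    (cycleOf_mem_cycleFactorsFinset_iff.2 (mem_support.2 hx))
  have hf : f = c * ρ := by rw [← hρc.commute.eq]; exact (inv_mul_cancel_right f c).symm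
  have hc'ρ : (swap x (c x) * c).Disjoint ρ := by
    refine hρc.symm.mono ?_ le_rfl
    rw [support_swap_mul_eq c x hccx]
    exact sdiff_subset
  have hsplit : swap x (f x) * f = swap x (c x) * c * ρ := by rw [hcx, mul_assoc, ← hf]
  rw [hsplit, hc'ρ.cycleType_mul, hf, hρc.symm.cycleType_mul, hc.cycleType, hc'.cycleType]
  simp

theorem card_parts_partition_swap_mul {τ : Perm α} {a b : α} (hab : a ≠ b) (ha : τ a = a) :
    (swap a b * τ).partition.parts.card + 1 = τ.partition.parts.card := by
  have hle := card_le_univ (swap a b * τ).support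
  simp only [parts_partition, Multiset.card_add, Multiset.card_replicate]
  by_cases hb : τ b = b
  · have hdisj : (swap a b).Disjoint τ := by
      intro x
      by_cases hx : x = a ∨ x = b
      · rcases hx with rfl | rfl <;> simp [*]
      · exact Or.inl (swap_apply_of_ne_of_ne (not_or.1 hx).1 (not_or.1 hx).2)
    rw [hdisj.cycleType_mul, (isCycle_swap hab).cycleType, hdisj.card_support_mul,
      card_support_swap hab] at *
    simp only [Multiset.card_add, Multiset.card_singleton]
    omega
  · set μ := swap a b * τ
    have hμa : μ a = b := by simp [μ, ha]
    have hτ : τ = swap a (μ a) * μ := by rw [hμa, swap_mul_self_mul]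
    have hμμa : μ (μ a) ≠ a := by
      have hτb : τ b ≠ a := fun h => hab (τ.injective (h.trans ha.symm)).symm
      rwa [hμa, mul_apply, swap_apply_of_ne_of_ne hτb hb]
    have hμ : μ a ≠ a := hμa ▸ hab.symm
    have hcycles : Multiset.card τ.cycleType = Multiset.card μ.cycleType := by
      rw [hτ]; exact card_cycleType_swap_mul hμ hμμa
    have hsupp : #τ.support + 1 = #μ.support := by
      rw [hτ]; exact card_support_swap_mul_add_one hμ hμμa
    omega

theorem decomposeFin_symm_eq_swap_mul {k : ℕ} (p : Fin (k + 1)) (σ : Perm (Fin k)) :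
    Perm.decomposeFin.symm (p, σ) = swap 0 p * σ.extendDomain (finSuccAboveEquiv 0) := by
  ext x
  refine Fin.cases ?_ (fun y => ?_) x
  · simp [Perm.extendDomain_apply_not_subtype]
  · have := σ.extendDomain_apply_image (finSuccAboveEquiv 0) y
    simp only [finSuccAboveEquiv_apply, Fin.succAbove_zero] at this
    simp [this]

end Equiv.Perm

theorem cycleCount_eq_card_parts {k : ℕ} (σ : Perm (Fin k)) :
    cycleCount σ = σ.partition.parts.card := by
  simp [cycleCount, Perm.parts_partition]

theorem cycleCount_pos {k : ℕ} [NeZero k] (σ : Perm (Fin k)) : 0 < cycleCount σ := by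
  rw [cycleCount_eq_card_parts, Multiset.card_pos]
  intro h
  have := σ.partition.parts_sum
  simp [h, eq_comm, NeZero.ne k] at this

theorem cycleCount_extendDomain {k : ℕ} (σ : Perm (Fin k)) :
    cycleCount (σ.extendDomain (finSuccAboveEquiv 0)) = cycleCount σ + 1 := by
  have hle := σ.sum_cycleType_le
  simp only [cycleCount, ← Perm.sum_cycleType, Perm.cycleType_extendDomain, Fintype.card_fin]
    at hle ⊢
  omega

theorem cycleCount_decomposeFin_symm {k : ℕ} (p : Fin (k + 1)) (σ : Perm (Fin k)) :
    cycleCount (Perm.decomposeFin.symm (p, σ)) = cycleCount σ + if p = 0 then 1 else 0 := by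
  rw [Perm.decomposeFin_symm_eq_swap_mul]
  split_ifs with hp
  · rw [hp, swap_self, ← Perm.one_def, one_mul, cycleCount_extendDomain]
  · have hfix : σ.extendDomain (finSuccAboveEquiv 0) 0 = 0 :=
      Perm.extendDomain_apply_not_subtype _ _ (by simp)
    have h := Perm.card_parts_partition_swap_mul (Ne.symm hp) hfix
    have h' := cycleCount_extendDomain σ
    rw [cycleCount_eq_card_parts] at h' ⊢
    omega

theorem stirlingFirst_succ_succ (k j : ℕ) :
    stirlingFirst (k + 1) (j + 1) = k * stirlingFirst k (j + 1) + stirlingFirst k j := by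
  classical
  rw [stirlingFirst, ← Nat.card_congr (Perm.decomposeFin.symm.subtypeEquiv fun _ => Iff.rfl)]
  simp only [stirlingFirst, Nat.card_eq_fintype_card, Fintype.card_subtype, card_filter,
    Fintype.sum_prod_type, Fin.sum_univ_succ, cycleCount_decomposeFin_symm]
  simp [Fin.succ_ne_zero, add_comm]

theorem stirlingFirst_eq_nat_stirlingFirst (k i : ℕ) :
    stirlingFirst k i = Nat.stirlingFirst k i := by
  induction k generalizing i with
  | zero => cases i <;> simp [stirlingFirst, cycleCount, Subsingleton.elim _ (1 : Perm (Fin 0))]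
  | succ k ih =>
    cases i with
    | zero => simp [stirlingFirst, (cycleCount_pos _).ne']
    | succ j => rw [stirlingFirst_succ_succ, Nat.stirlingFirst_succ_succ, ih, ih]

def stirlingFirstTopSum (k d : ℕ) : ℕ :=
  ∑ i ∈ range (d + 1), Nat.stirlingFirst k (k - i)

theorem stirlingFirstTopSum_zero (k : ℕ) : stirlingFirstTopSum k 0 = 1 := by
  simp [stirlingFirstTopSum, Nat.stirlingFirst_self]

theorem one_le_stirlingFirstTopSum (k d : ℕ) : 1 ≤ stirlingFirstTopSum k d :=
  (stirlingFirstTopSum_zero k).ge.trans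
    (sum_le_sum_of_subset (range_subset_range.2 (Nat.le_add_left 1 d)))

/-- The terms with `i > k` are `c(k, 0)`, which vanish only for `k ≠ 0`. -/
theorem stirlingFirstTopSum_succ_succ {k : ℕ} (hk : k ≠ 0) (d : ℕ) :
    stirlingFirstTopSum (k + 1) (d + 1) =
      stirlingFirstTopSum k (d + 1) + k * stirlingFirstTopSum k d := by
  have hterm : ∀ i, Nat.stirlingFirst (k + 1) (k + 1 - i) =
      Nat.stirlingFirst k (k - i) + k * Nat.stirlingFirst k (k + 1 - i) := by
    intro i
    rcases le_or_gt i k with hi | hi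
    · rw [Nat.sub_add_comm hi, Nat.stirlingFirst_succ_succ, add_comm]
    · obtain ⟨m, rfl⟩ := Nat.exists_eq_succ_of_ne_zero hk
      simp [Nat.sub_eq_zero_of_le hi.le, Nat.sub_eq_zero_of_le hi]
  have hshift : ∑ i ∈ range (d + 2), Nat.stirlingFirst k (k + 1 - i) =
      stirlingFirstTopSum k d := by
    rw [sum_range_succ']
    simp [stirlingFirstTopSum, Nat.stirlingFirst_eq_zero_of_lt]
  simp only [stirlingFirstTopSum, hterm, sum_add_distrib, ← mul_sum, hshift]

namespace Equiv.Perm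

variable {k : ℕ}

/-- The order `π` of the events `0, …, k` with the event `Fin.last k` deleted. -/
def eraseLast (π : Perm (Fin (k + 1))) : Perm (Fin k) :=
  (finSuccAboveEquiv (π.symm (Fin.last k))).trans
    ((π.subtypeEquiv fun _ => not_congr π.eq_symm_apply).trans
      (finSuccAboveEquiv (Fin.last k)).symm)

theorem castSucc_eraseLast (π : Perm (Fin (k + 1))) (j : Fin k) :
    (eraseLast π j).castSucc = π ((π.symm (Fin.last k)).succAbove j) := by
  have h : ∀ x : Fin k, x.castSucc = (finSuccAboveEquiv (Fin.last k) x : Fin (k + 1)) :=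
    fun x => (Fin.succAbove_last_apply x).symm
  rw [h, eraseLast]
  simp only [trans_apply, apply_symm_apply, subtypeEquiv_apply, finSuccAboveEquiv_apply]

theorem eq_of_eraseLast_eq {π₁ π₂ : Perm (Fin (k + 1))} (h : eraseLast π₁ = eraseLast π₂)
    (hs : π₁.symm (Fin.last k) = π₂.symm (Fin.last k)) : π₁ = π₂ := by
  ext1 m
  by_cases hm : m = π₁.symm (Fin.last k)
  · rw [hm, apply_symm_apply, hs, apply_symm_apply]
  · obtain ⟨j, rfl⟩ := Fin.exists_succAbove_eq hm
    rw [← castSucc_eraseLast, h, hs, castSucc_eraseLast]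

end Equiv.Perm

section AffineOrders

open Perm

variable {V P : Type*} [AddCommGroup V] [Module ℝ V] [AddTorsor V P]

open Classical in
def realizableOrders {k : ℕ} (f : Fin k → P →ᵃ[ℝ] ℝ) : Finset (Perm (Fin k)) :=
  {π | ∃ p, StrictMono fun m => f (π m) p}

open Classical in
def crossingOrders {k : ℕ} (f : Fin k → P →ᵃ[ℝ] ℝ) (g : P →ᵃ[ℝ] ℝ) : Finset (Perm (Fin k)) :=
  {π | ∃ p₁ p₂, (StrictMono fun m => f (π m) p₁) ∧ (StrictMono fun m => f (π m) p₂) ∧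
    g p₁ < 0 ∧ 0 < g p₂}

theorem exists_eq_zero_strictMono_of_neg_of_pos {ι : Type*} [Preorder ι]
    {f : ι → P →ᵃ[ℝ] ℝ} {g : P →ᵃ[ℝ] ℝ} {p₁ p₂ : P}
    (h₁ : StrictMono fun i => f i p₁) (h₂ : StrictMono fun i => f i p₂)
    (hg₁ : g p₁ < 0) (hg₂ : 0 < g p₂) :
    ∃ p, g p = 0 ∧ StrictMono fun i => f i p := by
  set θ := g p₁ / (g p₁ - g p₂)
  have hθ₀ : 0 ≤ θ := div_nonneg_of_nonpos hg₁.le (by linarith)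
  have hθ₁ : θ ≤ 1 := (div_le_one_of_neg (by linarith)).2 (by linarith)
  refine ⟨AffineMap.lineMap p₁ p₂ θ, ?_, fun i j hij => ?_⟩
  · rw [AffineMap.apply_lineMap, AffineMap.lineMap_apply_ring']
    have : g p₁ - g p₂ ≠ 0 := by linarith
    simp only [θ]
    field_simp
    ring
  · simp only [AffineMap.apply_lineMap]
    exact lineMap_strict_mono_endpoints (h₁ hij) (h₂ hij) hθ₀ hθ₁

theorem exists_affineSubspace_crossingOrders_subset [FiniteDimensional ℝ V] {k : ℕ}
    {f : Fin k → P →ᵃ[ℝ] ℝ} {g : P →ᵃ[ℝ] ℝ} (h : (crossingOrders f g).Nonempty) :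
    ∃ (H : AffineSubspace ℝ P) (_ : Nonempty H), finrank ℝ H.direction + 1 = finrank ℝ V ∧
      crossingOrders f g ⊆ realizableOrders fun i => (f i).comp H.subtype := by
  obtain ⟨π, hπ⟩ := h
  simp only [crossingOrders, mem_filter, mem_univ, true_and] at hπ
  obtain ⟨p₁, p₂, h₁, h₂, hg₁, hg₂⟩ := hπ
  obtain ⟨p₀, hp₀, -⟩ := exists_eq_zero_strictMono_of_neg_of_pos h₁ h₂ hg₁ hg₂
  have hg : g.linear ≠ 0 := by
    intro h0
    have := g.linearMap_vsub p₂ p₁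
    rw [h0, LinearMap.zero_apply, vsub_eq_sub, eq_comm, sub_eq_zero] at this
    linarith
  have hmem : ∀ p, p ∈ AffineSubspace.mk' p₀ (LinearMap.ker g.linear) ↔ g p = 0 := by
    intro p
    rw [AffineSubspace.mem_mk', LinearMap.mem_ker, g.linearMap_vsub, hp₀, vsub_eq_sub, sub_zero]
  refine ⟨AffineSubspace.mk' p₀ (LinearMap.ker g.linear), ⟨⟨p₀, AffineSubspace.self_mem_mk' _ _⟩⟩,
    ?_, fun σ hσ => ?_⟩
  · rw [AffineSubspace.direction_mk']
    exact Module.Dual.finrank_ker_add_one_of_ne_zero hg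
  · simp only [crossingOrders, realizableOrders, mem_filter, mem_univ, true_and] at hσ ⊢
    obtain ⟨q₁, q₂, h₁, h₂, hg₁, hg₂⟩ := hσ
    obtain ⟨q, hq, hmono⟩ := exists_eq_zero_strictMono_of_neg_of_pos h₁ h₂ hg₁ hg₂
    exact ⟨⟨q, (hmem q).2 hq⟩, hmono⟩

section EraseLast

variable {k : ℕ} {f : Fin (k + 1) → P →ᵃ[ℝ] ℝ}

theorem strictMono_eraseLast {π : Perm (Fin (k + 1))} {p : P}
    (h : StrictMono fun m => f (π m) p) :
    StrictMono fun m => f (eraseLast π m).castSucc p := by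
  simp only [castSucc_eraseLast]
  exact h.comp (Fin.strictMono_succAbove _)

theorem eraseLast_mem_realizableOrders {π : Perm (Fin (k + 1))}
    (hπ : π ∈ realizableOrders f) :
    eraseLast π ∈ realizableOrders fun i => f i.castSucc := by
  simp only [realizableOrders, mem_filter, mem_univ, true_and] at hπ ⊢
  obtain ⟨p, hp⟩ := hπ
  exact ⟨p, strictMono_eraseLast hp⟩

/-- The event `eraseLast π₂ j` comes just before the last event in `π₂`, and after it in `π₁`. -/
theorem eraseLast_mem_crossingOrders {π₁ π₂ : Perm (Fin (k + 1))}
    (h₁ : π₁ ∈ realizableOrders f) (h₂ : π₂ ∈ realizableOrders f)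
    (h : eraseLast π₁ = eraseLast π₂) {j : Fin k} (hj : π₂.symm (Fin.last k) = j.succ)
    (hlt : π₁.symm (Fin.last k) < j.succ) :
    eraseLast π₂ ∈ crossingOrders (fun i => f i.castSucc)
      (f (eraseLast π₂ j).castSucc - f (Fin.last k)) := by
  simp only [realizableOrders, crossingOrders, mem_filter, mem_univ, true_and] at h₁ h₂ ⊢
  obtain ⟨p₁, hp₁⟩ := h₁
  obtain ⟨p₂, hp₂⟩ := h₂
  have hi₂ : (eraseLast π₂ j).castSucc = π₂ j.castSucc := by
    rw [castSucc_eraseLast, hj, Fin.succAbove_of_castSucc_lt _ _ Fin.castSucc_lt_succ]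
  have hi₁ : (eraseLast π₂ j).castSucc = π₁ j.succ := by
    rw [← h, castSucc_eraseLast, Fin.succAbove_of_le_castSucc _ _ (Fin.le_castSucc_iff.2 hlt)]
  refine ⟨p₂, p₁, strictMono_eraseLast hp₂, h ▸ strictMono_eraseLast hp₁, ?_, ?_⟩
  · have := hp₂ (Fin.castSucc_lt_succ (i := j))
    simp only [← hj, apply_symm_apply, ← hi₂] at this
    simpa using this
  · have := hp₁ hlt
    simp only [apply_symm_apply, ← hi₁] at this
    simpa using this

variable (f)

theorem card_filter_eraseLast_eq_le (σ : Perm (Fin k)) :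
    #{π ∈ realizableOrders f | eraseLast π = σ} ≤
      #{i : Fin k | σ ∈ crossingOrders (fun i => f i.castSucc) (f i.castSucc - f (Fin.last k))}
        + 1 := by
  set F := {π ∈ realizableOrders f | eraseLast π = σ}
  set C : Finset (Fin k) :=
    {i | σ ∈ crossingOrders (fun i => f i.castSucc) (f i.castSucc - f (Fin.last k))}
  set lastPos : Perm (Fin (k + 1)) → Fin (k + 1) := fun π => π.symm (Fin.last k)
  rcases F.eq_empty_or_nonempty with hF | hF
  · simp [hF]
  obtain ⟨π₀, hπ₀, hmin⟩ := F.exists_min_image lastPos hF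
  have hinj : Set.InjOn lastPos F := fun π₁ h₁ π₂ h₂ hs =>
    eq_of_eraseLast_eq ((mem_filter.1 h₁).2.trans (mem_filter.1 h₂).2.symm) hs
  have hsub : F.image lastPos ⊆ insert (lastPos π₀) (C.image fun i => (σ.symm i).succ) := by
    intro q hq
    obtain ⟨π, hπ, rfl⟩ := mem_image.1 hq
    rcases (hmin π hπ).eq_or_lt with heq | hlt
    · exact heq ▸ mem_insert_self _ _
    obtain ⟨j, hj⟩ := Fin.exists_succ_eq.2 ((Fin.zero_le _).trans_lt hlt).ne'
    have hσ := (mem_filter.1 hπ).2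
    have hcross := eraseLast_mem_crossingOrders (mem_filter.1 hπ₀).1 (mem_filter.1 hπ).1
      ((mem_filter.1 hπ₀).2.trans hσ.symm) hj.symm (hj ▸ hlt)
    rw [hσ] at hcross
    exact mem_insert_of_mem (mem_image.2 ⟨σ j, by simpa [C] using hcross, by simp [hj, lastPos]⟩)
  calc #F = #(F.image lastPos) := (card_image_of_injOn hinj).symm
    _ ≤ _ := card_le_card hsub
    _ ≤ _ := card_insert_le _ _
    _ ≤ _ := by gcongr; exact card_image_le

theorem card_realizableOrders_succ_le :
    #(realizableOrders f) ≤ #(realizableOrders fun i => f i.castSucc) +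
      ∑ i : Fin k, #(crossingOrders (fun i => f i.castSucc) (f i.castSucc - f (Fin.last k))) := by
  set R := realizableOrders fun i => f i.castSucc
  set X : Fin k → Finset (Perm (Fin k)) :=
    fun i => crossingOrders (fun i => f i.castSucc) (f i.castSucc - f (Fin.last k))
  calc #(realizableOrders f)
      = ∑ σ ∈ R, #{π ∈ realizableOrders f | eraseLast π = σ} :=
        card_eq_sum_card_fiberwise fun _ => eraseLast_mem_realizableOrders
    _ ≤ ∑ σ ∈ R, (#((univ : Finset (Fin k)).bipartiteAbove (fun σ i => σ ∈ X i) σ) + 1) :=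
        sum_le_sum fun σ _ => card_filter_eraseLast_eq_le f σ
    _ = #R + ∑ i, #(R.bipartiteBelow (fun σ i => σ ∈ X i) i) := by
        rw [sum_add_distrib, sum_card_bipartiteAbove_eq_sum_card_bipartiteBelow,
          card_eq_sum_ones R, add_comm]
    _ ≤ #R + ∑ i, #(X i) := by gcongr with i; exact fun σ hσ => (mem_filter.1 hσ).2

end EraseLast

theorem card_realizableOrders_le [FiniteDimensional ℝ V] {k : ℕ} (f : Fin k → P →ᵃ[ℝ] ℝ) :
    #(realizableOrders f) ≤ stirlingFirstTopSum k (finrank ℝ V) := by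
  induction k generalizing V P with
  | zero => exact (card_le_univ _).trans (by simpa using one_le_stirlingFirstTopSum 0 _)
  | succ k ih =>
    rcases eq_or_ne k 0 with rfl | hk
    · exact (card_le_univ _).trans (by simpa using one_le_stirlingFirstTopSum 1 _)
    refine (card_realizableOrders_succ_le f).trans ?_
    have hR := ih fun i => f i.castSucc
    cases hd : finrank ℝ V with
    | zero =>
      have hX : ∀ g : P →ᵃ[ℝ] ℝ, crossingOrders (fun i => f i.castSucc) g = ∅ := by
        intro g
        by_contra hne
        obtain ⟨H, _, hH, -⟩ := exists_affineSubspace_crossingOrders_subset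
          (nonempty_iff_ne_empty.2 hne)
        omega
      simpa [hX, hd, stirlingFirstTopSum_zero] using hR
    | succ d =>
      have hX : ∀ g : P →ᵃ[ℝ] ℝ,
          #(crossingOrders (fun i => f i.castSucc) g) ≤ stirlingFirstTopSum k d := by
        intro g
        rcases (crossingOrders (fun i => f i.castSucc) g).eq_empty_or_nonempty with h | h
        · simp [h]
        obtain ⟨H, _, hH, hsub⟩ := exists_affineSubspace_crossingOrders_subset h
        have := ih fun i => (f i.castSucc).comp H.subtype
        rw [show finrank ℝ H.direction = d by omega] at this
        exact (card_le_card hsub).trans this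
      rw [hd] at hR
      rw [stirlingFirstTopSum_succ_succ hk]
      calc _ ≤ stirlingFirstTopSum k (d + 1) + ∑ _i : Fin k, stirlingFirstTopSum k d :=
            add_le_add hR (sum_le_sum fun i _ => hX _)
        _ = _ := by simp

end AffineOrders

def obsTimeMap {n k : ℕ} (t : Fin k → ℝ) (x : Fin k → EuclideanSpace ℝ (Fin n)) (i : Fin k) :
    EuclideanSpace ℝ (Fin n) →ᵃ[ℝ] ℝ where
  toFun v := obsTime t x v i
  linear := -innerₛₗ ℝ (x i)
  map_vadd' v w := by
    simp only [obsTime, vadd_eq_add, inner_add_right, LinearMap.neg_apply, innerₛₗ_apply_apply]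
    ring

theorem Achievable.mem_realizableOrders {n k : ℕ} {t : Fin k → ℝ}
    {x : Fin k → EuclideanSpace ℝ (Fin n)} {π : Perm (Fin k)} (h : Achievable t x π) :
    π ∈ realizableOrders (obsTimeMap t x) := by
  obtain ⟨v, -, hv⟩ := h
  simpa [realizableOrders] using ⟨v, hv⟩

theorem number_of_orders_le_sum_stirling_general
    (n k : ℕ) (t : Fin k → ℝ) (x : Fin k → EuclideanSpace ℝ (Fin n)) :
    Nat.card {π : Equiv.Perm (Fin k) // Achievable t x π}
      ≤ ∑ i ∈ Finset.range (n + 1), stirlingFirst k (k - i) := by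
  classical
  calc Nat.card {π // Achievable t x π}
      = #{π | Achievable t x π} := by rw [Nat.card_eq_fintype_card, Fintype.card_subtype]
    _ ≤ #(realizableOrders (obsTimeMap t x)) :=
        card_le_card fun π hπ => (mem_filter.1 hπ).2.mem_realizableOrders
    _ ≤ stirlingFirstTopSum k n := by
        simpa using card_realizableOrders_le (obsTimeMap t x)
    _ = ∑ i ∈ range (n + 1), stirlingFirst k (k - i) := by
        simp [stirlingFirstTopSum, stirlingFirst_eq_nat_stirlingFirst]

/-- **Theorem 2 (inequality part).** For `k` pairwise spacelike separated
events in `ℝ^{1,n}`, the number of achievable orders is at most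
`c(k,k) + c(k,k-1) + ⋯ + c(k,k-n)`. -/
theorem number_of_orders_le_sum_stirling
    (n k : ℕ) (t : Fin k → ℝ) (x : Fin k → EuclideanSpace ℝ (Fin n))
    (hsep : ∀ i j : Fin k, i ≠ j → (t i - t j) ^ 2 < ‖x i - x j‖ ^ 2) :
    Nat.card {π : Equiv.Perm (Fin k) // Achievable t x π}
      ≤ ∑ i ∈ Finset.range (n + 1), stirlingFirst k (k - i) :=
  number_of_orders_le_sum_stirling_general n k t x
end
end

section
/- (Theorem 3.) Let p₁ = (t₁,x₁), …, p_k = (t_k,x_k) be events in ℝ × ℝⁿ such that no two are lightlike separated, and let G be their separation graph. Then the number O(p₁,…,p_k) of achievable orders equals the number of connected components of ℝⁿ ∖ ⋃_{{i,j} ∈ E(G)} H_{ij} that contain a point v with ‖v‖ < 1. -/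
open scoped InnerProductSpace

noncomputable section

/-- The events `p i = (t i, x i)` and `p j = (t j, x j)` are spacelike
separated; i.e., `{i, j}` is an edge of the separation graph. -/
def SpacelikeSep {n k : ℕ} (t : Fin k → ℝ) (x : Fin k → EuclideanSpace ℝ (Fin n))
    (i j : Fin k) : Prop :=
  (t i - t j) ^ 2 < ‖x i - x j‖ ^ 2

/-- The complement `ℝⁿ ∖ ⋃_{{i,j} ∈ E(G)} H_{ij}`, where `G` is the separation
graph and `H_{ij} = {v : t i - t j = ⟪x i - x j, v⟫}`. -/
def goodRegionGraph {n k : ℕ} (t : Fin k → ℝ) (x : Fin k → EuclideanSpace ℝ (Fin n)) :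
    Set (EuclideanSpace ℝ (Fin n)) :=
  {v | ∀ i j : Fin k, i ≠ j → SpacelikeSep t x i j → t i - t j ≠ ⟪x i - x j, v⟫_ℝ}

/-- The connected components of `ℝⁿ ∖ ⋃_{{i,j} ∈ E(G)} H_{ij}` that contain a
point `v` with `‖v‖ < 1`. -/
def ballComponentsGraph {n k : ℕ} (t : Fin k → ℝ)
    (x : Fin k → EuclideanSpace ℝ (Fin n)) : Set (Set (EuclideanSpace ℝ (Fin n))) :=
  {C | ∃ v, ‖v‖ < 1 ∧ v ∈ goodRegionGraph t x ∧
    C = connectedComponentIn (goodRegionGraph t x) v}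

namespace SepGraphAux

variable {n k : ℕ} {t : Fin k → ℝ} {x : Fin k → EuclideanSpace ℝ (Fin n)}

/-- The affine function whose sign determines the order of events `i` and `j`. -/
def fdiff (t : Fin k → ℝ) (x : Fin k → EuclideanSpace ℝ (Fin n)) (i j : Fin k)
    (v : EuclideanSpace ℝ (Fin n)) : ℝ :=
  (t i - t j) - ⟪x i - x j, v⟫_ℝ

lemma obsTime_sub (v : EuclideanSpace ℝ (Fin n)) (i j : Fin k) :
    obsTime t x v i - obsTime t x v j = fdiff t x i j v := by
  simp only [obsTime, fdiff, inner_sub_left]; ring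

lemma fdiff_continuous (i j : Fin k) : Continuous (fdiff t x i j) :=
  continuous_const.sub (Continuous.inner continuous_const continuous_id)

lemma fdiff_affine (i j : Fin k) (a b : ℝ) (hab : a + b = 1)
    (v w : EuclideanSpace ℝ (Fin n)) :
    fdiff t x i j (a • v + b • w) = a * fdiff t x i j v + b * fdiff t x i j w := by
  simp only [fdiff, inner_add_right, real_inner_smul_right]
  linear_combination (t j - t i) * hab

lemma fdiff_ne_zero_of_timelike
    (hnl : ∀ i j : Fin k, i ≠ j → (t i - t j) ^ 2 ≠ ‖x i - x j‖ ^ 2)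
    {i j : Fin k} (hij : i ≠ j) (hsp : ¬ SpacelikeSep t x i j)
    {v : EuclideanSpace ℝ (Fin n)} (hv : ‖v‖ < 1) : fdiff t x i j v ≠ 0 := by
  have h1 : ‖x i - x j‖ ^ 2 < (t i - t j) ^ 2 :=
    lt_of_le_of_ne (not_lt.mp hsp) (hnl i j hij).symm
  have h2 : ‖x i - x j‖ < |t i - t j| := by
    nlinarith [sq_abs (t i - t j), norm_nonneg (x i - x j), abs_nonneg (t i - t j)]
  intro h0
  have hip : ⟪x i - x j, v⟫_ℝ = t i - t j := by
    simp only [fdiff] at h0; linarith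
  have h3 := abs_real_inner_le_norm (x i - x j) v
  rw [hip] at h3
  nlinarith [norm_nonneg (x i - x j), abs_nonneg (t i - t j)]

lemma obsTime_injective
    (hnl : ∀ i j : Fin k, i ≠ j → (t i - t j) ^ 2 ≠ ‖x i - x j‖ ^ 2)
    {v : EuclideanSpace ℝ (Fin n)} (hb : ‖v‖ < 1) (hg : v ∈ goodRegionGraph t x) :
    Function.Injective (obsTime t x v) := by
  intro i j hvij
  by_contra hij
  have : fdiff t x i j v ≠ 0 := by
    by_cases hsp : SpacelikeSep t x i j
    · exact sub_ne_zero.mpr (hg i j hij hsp)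
    · exact fdiff_ne_zero_of_timelike hnl hij hsp hb
  exact this (by rw [← obsTime_sub, hvij, sub_self])

lemma sign_const {s : Set (EuclideanSpace ℝ (Fin n))} (hs : IsPreconnected s)
    {f : EuclideanSpace ℝ (Fin n) → ℝ} (hf : Continuous f)
    (h0 : ∀ z ∈ s, f z ≠ 0) {v w : EuclideanSpace ℝ (Fin n)}
    (hv : v ∈ s) (hw : w ∈ s) : 0 < f v ↔ 0 < f w := by
  have key : ∀ a b, a ∈ s → b ∈ s → 0 < f a → 0 < f b := by
    intro a b ha hb hfa
    by_contra hfb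
    have h0m : (0:ℝ) ∈ Set.Icc (f b) (f a) := ⟨le_of_not_gt hfb, hfa.le⟩
    obtain ⟨z, hz, hz0⟩ := hs.intermediate_value hb ha hf.continuousOn h0m
    exact h0 z hz hz0
  exact ⟨key v w hv hw, key w v hw hv⟩

lemma ball_preconnected : IsPreconnected {v : EuclideanSpace ℝ (Fin n) | ‖v‖ < 1} := by
  have he : {v : EuclideanSpace ℝ (Fin n) | ‖v‖ < 1} = Metric.ball 0 1 := by
    ext v; simp [Metric.mem_ball, dist_zero_right]
  rw [he]
  exact (convex_ball (0 : EuclideanSpace ℝ (Fin n)) 1).isPreconnected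

lemma lt_iff_pos_fdiff (u : EuclideanSpace ℝ (Fin n)) (i j : Fin k) :
    obsTime t x u i < obsTime t x u j ↔ 0 < fdiff t x j i u := by
  rw [← obsTime_sub]
  exact sub_pos.symm

lemma order_eq_of_same_component
    (hnl : ∀ i j : Fin k, i ≠ j → (t i - t j) ^ 2 ≠ ‖x i - x j‖ ^ 2)
    {v w : EuclideanSpace ℝ (Fin n)}
    (hvb : ‖v‖ < 1) (hwb : ‖w‖ < 1) (hvg : v ∈ goodRegionGraph t x)
    (hw : w ∈ connectedComponentIn (goodRegionGraph t x) v) (i j : Fin k) :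
    (obsTime t x v i < obsTime t x v j ↔ obsTime t x w i < obsTime t x w j) := by
  rcases eq_or_ne i j with rfl | hij
  · simp
  have key : (0 < fdiff t x j i v ↔ 0 < fdiff t x j i w) := by
    by_cases hsp : SpacelikeSep t x j i
    · refine sign_const isPreconnected_connectedComponentIn (fdiff_continuous j i)
        (fun z hz => ?_) (mem_connectedComponentIn hvg) hw
      have hzg : z ∈ goodRegionGraph t x := connectedComponentIn_subset _ _ hz
      exact sub_ne_zero.mpr (hzg j i hij.symm hsp)
    · exact sign_const ball_preconnected (fdiff_continuous j i)
        (fun z hz => fdiff_ne_zero_of_timelike hnl hij.symm hsp hz) hvb hwb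
  rw [lt_iff_pos_fdiff v i j, lt_iff_pos_fdiff w i j]
  exact key

lemma component_eq_of_same_order {v w : EuclideanSpace ℝ (Fin n)}
    (hvg : v ∈ goodRegionGraph t x) (hwg : w ∈ goodRegionGraph t x)
    (hsame : ∀ i j : Fin k,
      obsTime t x v i < obsTime t x v j ↔ obsTime t x w i < obsTime t x w j) :
    connectedComponentIn (goodRegionGraph t x) v
      = connectedComponentIn (goodRegionGraph t x) w := by
  have hseg : segment ℝ v w ⊆ goodRegionGraph t x := by
    rintro u ⟨a, b, ha, hb, hab, rfl⟩
    intro i j hij hsp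
    have hfv : fdiff t x i j v ≠ 0 := sub_ne_zero.mpr (hvg i j hij hsp)
    have hfw : fdiff t x i j w ≠ 0 := sub_ne_zero.mpr (hwg i j hij hsp)
    have hsgn : 0 < fdiff t x i j v ↔ 0 < fdiff t x i j w := by
      rw [← lt_iff_pos_fdiff v j i, ← lt_iff_pos_fdiff w j i]
      exact hsame j i
    have hne : fdiff t x i j (a • v + b • w) ≠ 0 := by
      rw [fdiff_affine i j a b hab]
      intro hz
      rcases eq_or_lt_of_le ha with rfl | ha'
      · have hb1 : b = 1 := by linarith
        rw [hb1] at hz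
        simp at hz
        exact hfw hz
      rcases lt_or_gt_of_ne hfv with hv0 | hv0
      · have hw0 : fdiff t x i j w < 0 := by
          rcases lt_or_gt_of_ne hfw with h | h
          · exact h
          · exact absurd (hsgn.mpr h) (not_lt.mpr hv0.le)
        have h1 : a * fdiff t x i j v < 0 := mul_neg_of_pos_of_neg ha' hv0
        have h2 : b * fdiff t x i j w ≤ 0 := mul_nonpos_of_nonneg_of_nonpos hb hw0.le
        linarith
      · have hw0 : 0 < fdiff t x i j w := hsgn.mp hv0
        have h1 : 0 < a * fdiff t x i j v := mul_pos ha' hv0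
        have h2 : 0 ≤ b * fdiff t x i j w := mul_nonneg hb hw0.le
        linarith
    exact sub_ne_zero.mp hne
  have hpre : IsPreconnected (segment ℝ v w) := (convex_segment v w).isPreconnected
  have hsub := hpre.subset_connectedComponentIn (left_mem_segment ℝ v w) hseg
  exact connectedComponentIn_eq (hsub (right_mem_segment ℝ v w))

lemma witness_lt_iff {π : Equiv.Perm (Fin k)} {v : EuclideanSpace ℝ (Fin n)}
    (h : StrictMono fun m => obsTime t x v (π m)) (i j : Fin k) :
    obsTime t x v i < obsTime t x v j ↔ π.symm i < π.symm j := by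
  have := h.lt_iff_lt (a := π.symm i) (b := π.symm j)
  simpa using this

lemma witness_mem_good {π : Equiv.Perm (Fin k)} {v : EuclideanSpace ℝ (Fin n)}
    (h : StrictMono fun m => obsTime t x v (π m)) : v ∈ goodRegionGraph t x := by
  intro i j hij hsp
  have hne : obsTime t x v i ≠ obsTime t x v j := by
    intro hh
    have hinj : Function.Injective (obsTime t x v) := by
      intro a b hab
      have hab' : (fun m => obsTime t x v (π m)) (π.symm a)
          = (fun m => obsTime t x v (π m)) (π.symm b) := by simpa using hab
      have := h.injective hab'
      simpa using congrArg π this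
    exact hij (hinj hh)
  intro he
  apply hne
  have h2 := obsTime_sub (t := t) (x := x) v i j
  simp only [fdiff, ← he] at h2
  linarith

lemma perm_eq_of_order {π σ : Equiv.Perm (Fin k)}
    (h : ∀ i j : Fin k, π.symm i < π.symm j ↔ σ.symm i < σ.symm j) : π = σ := by
  have hm : StrictMono fun a : Fin k => σ.symm (π a) := by
    intro a b hab
    rw [← h]
    simpa using hab
  have hid : ∀ a : Fin k, σ.symm (π a) = a := by
    have hsurj : Function.Surjective fun a : Fin k => σ.symm (π a) :=
      σ.symm.surjective.comp π.surjective
    have he : StrictMono.orderIsoOfSurjective _ hm hsurj = OrderIso.refl (Fin k) :=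
      Subsingleton.elim _ _
    intro a
    have h3 := congrFun (congrArg (fun e : Fin k ≃o Fin k => (e : Fin k → Fin k)) he) a
    simpa using h3
  apply Equiv.ext
  intro a
  calc π a = σ (σ.symm (π a)) := (σ.apply_symm_apply _).symm
    _ = σ a := by rw [hid a]

lemma exists_sort_perm
    (hnl : ∀ i j : Fin k, i ≠ j → (t i - t j) ^ 2 ≠ ‖x i - x j‖ ^ 2)
    {v : EuclideanSpace ℝ (Fin n)} (hb : ‖v‖ < 1) (hg : v ∈ goodRegionGraph t x) :
    ∃ π : Equiv.Perm (Fin k), StrictMono fun m => obsTime t x v (π m) := by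
  refine ⟨Tuple.sort (obsTime t x v), ?_⟩
  have hmono := Tuple.monotone_sort (obsTime t x v)
  have hinj : Function.Injective (obsTime t x v ∘ Tuple.sort (obsTime t x v)) :=
    (obsTime_injective hnl hb hg).comp (Tuple.sort (obsTime t x v)).injective
  exact hmono.strictMono_of_injective hinj

end SepGraphAux

open SepGraphAux in
/-- **Theorem 3.** For `k` events, no two lightlike separated, the number of
achievable orders equals the number of connected components of the complement
of the hyperplanes indexed by the edges of the separation graph that meet the
open unit ball. -/
theorem number_of_orders_eq_number_of_regions_sepGraph
    (n k : ℕ) (t : Fin k → ℝ) (x : Fin k → EuclideanSpace ℝ (Fin n))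
    (hnl : ∀ i j : Fin k, i ≠ j → (t i - t j) ^ 2 ≠ ‖x i - x j‖ ^ 2) :
    Nat.card {π : Equiv.Perm (Fin k) // Achievable t x π}
      = Nat.card (ballComponentsGraph t x) := by
  classical
  have hmemgood : ∀ p : {π : Equiv.Perm (Fin k) // Achievable t x π},
      p.2.choose ∈ goodRegionGraph t x := fun p => witness_mem_good p.2.choose_spec.2
  let F : {π : Equiv.Perm (Fin k) // Achievable t x π} → ballComponentsGraph t x :=
    fun p => ⟨connectedComponentIn (goodRegionGraph t x) p.2.choose,
      p.2.choose, p.2.choose_spec.1, hmemgood p, rfl⟩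
  apply Nat.card_eq_of_bijective F
  constructor
  · intro p q hpq
    have hcomp : connectedComponentIn (goodRegionGraph t x) p.2.choose
        = connectedComponentIn (goodRegionGraph t x) q.2.choose :=
      congrArg Subtype.val hpq
    have hq_mem : q.2.choose ∈ connectedComponentIn (goodRegionGraph t x) p.2.choose := by
      rw [hcomp]
      exact mem_connectedComponentIn (hmemgood q)
    have hord := order_eq_of_same_component hnl p.2.choose_spec.1 q.2.choose_spec.1
      (hmemgood p) hq_mem
    have hiff : ∀ i j : Fin k, p.1.symm i < p.1.symm j ↔ q.1.symm i < q.1.symm j := by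
      intro i j
      rw [← witness_lt_iff p.2.choose_spec.2 i j, ← witness_lt_iff q.2.choose_spec.2 i j]
      exact hord i j
    exact Subtype.ext (perm_eq_of_order hiff)
  · rintro ⟨C, w, hwb, hwg, rfl⟩
    obtain ⟨π, hπ⟩ := exists_sort_perm hnl hwb hwg
    have hA : Achievable t x π := ⟨w, hwb, hπ⟩
    refine ⟨⟨π, hA⟩, ?_⟩
    apply Subtype.ext
    show connectedComponentIn (goodRegionGraph t x) hA.choose
      = connectedComponentIn (goodRegionGraph t x) w
    exact component_eq_of_same_order (witness_mem_good hA.choose_spec.2) hwg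
      (fun i j => (witness_lt_iff hA.choose_spec.2 i j).trans
        (witness_lt_iff hπ i j).symm)
end
end

section
/- For every k ≥ 1 and every pair of permutations π₁, π₂ of {1,…,k}, there exist k pairwise spacelike separated events p₁ = (t₁,x₁), …, p_k = (t_k,x_k) in ℝ × ℝ and velocities v₁, v₂ ∈ (-1,1) such that for each j ∈ {1,2}, t_{π_j(1)} - v_j·x_{π_j(1)} < t_{π_j(2)} - v_j·x_{π_j(2)} < ⋯ < t_{π_j(k)} - v_j·x_{π_j(k)}. That is, any two prescribed orders of k events can be realized by two observers in ℝ^{1,1}. -/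
/-!
In light-cone coordinates `u = t - x`, `w = t + x` two events are spacelike separated iff
`Δu · Δw < 0`, and the time `t - v x` of an observer is a positive multiple of `u + c w`,
where `c = (1 - v) / (1 + v)` ranges over all of `(0, ∞)`.
Let `w` be the rank of an event in `π₁`, and `u = r₂ - N w` with `r₂` its rank in `π₂` and
`N = k + 1`. Then `u` strictly decreases along `w`, `u + N w = r₂` realizes `π₂`, and
`u + 2N w = N r₁ + r₂` orders lexicographically by `(r₁, r₂)`, hence realizes `π₁`.
-/

lemma mul_add_lt_mul_add_of_lt {N a b c : ℕ} (hab : a < b) (hc : c < N) (d : ℕ) :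
    N * a + c < N * b + d :=
  calc N * a + c < N * (a + 1) := by rw [mul_add_one]; omega
    _ ≤ N * b + d := le_add_right (Nat.mul_le_mul_left N hab)

lemma lightCone_sub_mul_sub_neg {N a₁ a₂ c₁ c₂ : ℕ} (ha : a₁ ≠ a₂) (hc₁ : c₁ < N)
    (hc₂ : c₂ < N) :
    (((c₁ : ℝ) - N * a₁) - ((c₂ : ℝ) - N * a₂)) * ((a₁ : ℝ) - a₂) < 0 := by
  rcases ha.lt_or_gt with h | h
  · have key : ((N * a₁ + c₂ : ℕ) : ℝ) < (N * a₂ + c₁ : ℕ) := by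
      exact_mod_cast mul_add_lt_mul_add_of_lt h hc₂ c₁
    have ha' : (a₁ : ℝ) < a₂ := by exact_mod_cast h
    push_cast at key
    exact mul_neg_of_pos_of_neg (by linarith) (by linarith)
  · have key : ((N * a₂ + c₁ : ℕ) : ℝ) < (N * a₁ + c₂ : ℕ) := by
      exact_mod_cast mul_add_lt_mul_add_of_lt h hc₁ c₂
    have ha' : (a₂ : ℝ) < a₁ := by exact_mod_cast h
    push_cast at key
    exact mul_neg_of_neg_of_pos (by linarith) (by linarith)

lemma sq_sub_lt_sq_sub_of_lightCone {u₁ u₂ w₁ w₂ : ℝ} (h : (u₁ - u₂) * (w₁ - w₂) < 0) :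
    ((u₁ + w₁) / 2 - (u₂ + w₂) / 2) ^ 2 < ((w₁ - u₁) / 2 - (w₂ - u₂) / 2) ^ 2 := by
  have key : ((u₁ + w₁) / 2 - (u₂ + w₂) / 2) ^ 2 - ((w₁ - u₁) / 2 - (w₂ - u₂) / 2) ^ 2
      = (u₁ - u₂) * (w₁ - w₂) := by ring
  linarith

lemma exists_velocity_observerTime_eq {c : ℝ} (hc : 0 < c) :
    ∃ v : ℝ, -1 < v ∧ v < 1 ∧
      ∀ u w : ℝ, (u + w) / 2 - v * ((w - u) / 2) = (u + c * w) / (1 + c) := by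
  refine ⟨(1 - c) / (1 + c), ?_, ?_, fun u w => ?_⟩
  · rw [lt_div_iff₀ (by linarith)]; linarith
  · rw [div_lt_one (by linarith)]; linarith
  · field_simp; ring

theorem two_orders_realizable_general
    (k : ℕ) (π₁ π₂ : Equiv.Perm (Fin k)) :
    ∃ t x : Fin k → ℝ,
      (∀ i j : Fin k, i ≠ j → (t i - t j) ^ 2 < (x i - x j) ^ 2) ∧
      ∃ v₁ v₂ : ℝ, -1 < v₁ ∧ v₁ < 1 ∧ -1 < v₂ ∧ v₂ < 1 ∧
        StrictMono (fun m : Fin k => t (π₁ m) - v₁ * x (π₁ m)) ∧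
        StrictMono (fun m : Fin k => t (π₂ m) - v₂ * x (π₂ m)) := by
  set N := k + 1
  let r₁ : Fin k → ℕ := fun i => π₁.symm i
  let r₂ : Fin k → ℕ := fun i => π₂.symm i
  have hr₂ (i : Fin k) : r₂ i < N := by simp only [r₂, N]; omega
  let u : Fin k → ℝ := fun i => r₂ i - N * r₁ i
  let w : Fin k → ℝ := fun i => r₁ i
  obtain ⟨v₁, hv₁, hv₁', time₁⟩ := exists_velocity_observerTime_eq (c := 2 * N) (by positivity)
  obtain ⟨v₂, hv₂, hv₂', time₂⟩ := exists_velocity_observerTime_eq (c := N) (by positivity)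
  refine ⟨fun i => (u i + w i) / 2, fun i => (w i - u i) / 2, fun i j hij => ?_,
    v₁, v₂, hv₁, hv₁', hv₂, hv₂', ?_, ?_⟩
  · have hr₁ : r₁ i ≠ r₁ j := fun h => hij (π₁.symm.injective (Fin.ext h))
    exact sq_sub_lt_sq_sub_of_lightCone (lightCone_sub_mul_sub_neg hr₁ (hr₂ i) (hr₂ j))
  · simp only [time₁]
    refine StrictMono.div_const (fun a b hab => ?_) (by positivity)
    have key : ((N * a + r₂ (π₁ a) : ℕ) : ℝ) < (N * b + r₂ (π₁ b) : ℕ) := by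
      exact_mod_cast mul_add_lt_mul_add_of_lt hab (hr₂ (π₁ a)) _
    simp only [u, w, r₁, Equiv.symm_apply_apply]
    push_cast at key
    linarith
  · simp only [time₂]
    refine StrictMono.div_const (fun a b hab => ?_) (by positivity)
    simp only [u, w, r₂, Equiv.symm_apply_apply]
    have hab' : ((a : ℕ) : ℝ) < (b : ℕ) := by exact_mod_cast hab
    linarith

/-- Any two prescribed orders of `k` events can be realized by two observers in
`ℝ^{1,1}`: there are `k` pairwise spacelike separated events and velocities
`v₁, v₂ ∈ (-1, 1)` realizing the orders `π₁` and `π₂` respectively. -/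
theorem two_orders_realizable
    (k : ℕ) (hk : 1 ≤ k) (π₁ π₂ : Equiv.Perm (Fin k)) :
    ∃ t x : Fin k → ℝ,
      (∀ i j : Fin k, i ≠ j → (t i - t j) ^ 2 < (x i - x j) ^ 2) ∧
      ∃ v₁ v₂ : ℝ, -1 < v₁ ∧ v₁ < 1 ∧ -1 < v₂ ∧ v₂ < 1 ∧
        StrictMono (fun m : Fin k => t (π₁ m) - v₁ * x (π₁ m)) ∧
        StrictMono (fun m : Fin k => t (π₂ m) - v₂ * x (π₂ m)) :=
  two_orders_realizable_general k π₁ π₂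
end

section
/- Let p₁ = (t₁,x₁), p₂ = (t₂,x₂), p₃ = (t₃,x₃) be any three events in ℝ × ℝ. Then there do not exist velocities v₁, v₂, v₃ ∈ (-1,1) such that: for v₁ the order is p₁ before p₂ before p₃ (i.e. t₁ - v₁x₁ < t₂ - v₁x₂ < t₃ - v₁x₃); for v₂ the order is p₂ before p₃ before p₁; and for v₃ the order is p₃ before p₁ before p₂. -/
/-- An affine function of `v` that is negative at `a` and at `b` is negative
at any point between them. -/
lemma affine_neg_between {A B a b c : ℝ} (hab : a ≤ c) (hcb : c ≤ b)
    (ha : A - a * B < 0) (hb : A - b * B < 0) : A - c * B < 0 := by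
  rcases eq_or_lt_of_le hab with rfl | hac
  · exact ha
  · have h1 : (c - a) * (A - b * B) < 0 :=
      mul_neg_of_pos_of_neg (by linarith) hb
    have h2 : (b - c) * (A - a * B) ≤ 0 :=
      mul_nonpos_of_nonneg_of_nonpos (by linarith) ha.le
    nlinarith [h1, h2]

/-- For three events in `ℝ^{1,1}`, no three observers can see the cyclic orders
`p₁ < p₂ < p₃`, `p₂ < p₃ < p₁` and `p₃ < p₁ < p₂`. -/
theorem no_three_cyclic_orders
    (t₁ t₂ t₃ x₁ x₂ x₃ : ℝ) :
    ¬ ∃ v₁ v₂ v₃ : ℝ,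
        (-1 < v₁ ∧ v₁ < 1) ∧ (-1 < v₂ ∧ v₂ < 1) ∧ (-1 < v₃ ∧ v₃ < 1) ∧
        (t₁ - v₁ * x₁ < t₂ - v₁ * x₂ ∧ t₂ - v₁ * x₂ < t₃ - v₁ * x₃) ∧
        (t₂ - v₂ * x₂ < t₃ - v₂ * x₃ ∧ t₃ - v₂ * x₃ < t₁ - v₂ * x₁) ∧
        (t₃ - v₃ * x₃ < t₁ - v₃ * x₁ ∧ t₁ - v₃ * x₁ < t₂ - v₃ * x₂) := by
  rintro ⟨v₁, v₂, v₃, _, _, _, ⟨h12a, h12b⟩, ⟨h2a, h2b⟩, ⟨h3a, h3b⟩⟩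
  -- f v = (t₁ - t₂) - v * (x₁ - x₂): neg at v₁, v₃, pos at v₂
  have f1 : (t₁ - t₂) - v₁ * (x₁ - x₂) < 0 := by ring_nf; ring_nf at h12a; linarith
  have f3 : (t₁ - t₂) - v₃ * (x₁ - x₂) < 0 := by ring_nf; ring_nf at h3b; linarith
  have f2 : ¬ ((t₁ - t₂) - v₂ * (x₁ - x₂) < 0) := by
    ring_nf; ring_nf at h2a h2b; intro h; linarith
  -- g v = (t₂ - t₃) - v * (x₂ - x₃): neg at v₁, v₂, pos at v₃
  have g1 : (t₂ - t₃) - v₁ * (x₂ - x₃) < 0 := by ring_nf; ring_nf at h12b; linarith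
  have g2 : (t₂ - t₃) - v₂ * (x₂ - x₃) < 0 := by ring_nf; ring_nf at h2a; linarith
  have g3 : ¬ ((t₂ - t₃) - v₃ * (x₂ - x₃) < 0) := by
    ring_nf; ring_nf at h3a h3b; intro h; linarith
  -- h v = (t₃ - t₁) - v * (x₃ - x₁): neg at v₂, v₃, pos at v₁
  have k2 : (t₃ - t₁) - v₂ * (x₃ - x₁) < 0 := by ring_nf; ring_nf at h2b; linarith
  have k3 : (t₃ - t₁) - v₃ * (x₃ - x₁) < 0 := by ring_nf; ring_nf at h3a; linarith
  have k1 : ¬ ((t₃ - t₁) - v₁ * (x₃ - x₁) < 0) := by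
    ring_nf; ring_nf at h12a h12b; intro h; linarith
  rcases le_total v₁ v₂ with h | h <;> rcases le_total v₂ v₃ with h' | h' <;>
    rcases le_total v₁ v₃ with h'' | h''
  · exact f2 (affine_neg_between h h' f1 f3)
  · exact f2 (affine_neg_between h h' f1 f3)
  · exact g3 (affine_neg_between h'' h' g1 g2)
  · exact k1 (affine_neg_between h'' h k3 k2)
  · exact k1 (affine_neg_between h h'' k2 k3)
  · exact g3 (affine_neg_between h' h'' g2 g1)
  · exact f2 (affine_neg_between h' h f3 f1)
  · exact f2 (affine_neg_between h' h f3 f1)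
end

section
/- Let p₁ = (t₁,x₁), …, p_k = (t_k,x_k) be pairwise spacelike separated events in ℝ × ℝ with x₁,…,x_k distinct, and suppose the k(k-1)/2 critical velocities v_{ij} = (t_i - t_j)/(x_i - x_j) (for i < j) are pairwise distinct. Let v < v' be two velocities in (-1,1), neither equal to any v_{rs}, such that exactly one critical velocity v_{ij} lies in the open interval (v, v'). Then the order of the values t_m - v·x_m and the order of the values t_m - v'·x_m are linear orders on {1,…,k} that agree except that the positions of i and j are interchanged, and i, j occupy adjacent positions in both orders. -/
noncomputable section

/-- The critical velocity `v_{ij} = (t i - t j)/(x i - x j)` at which the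
observed order of the events `(t i, x i)` and `(t j, x j)` changes. -/
def critVel {k : ℕ} (t x : Fin k → ℝ) (i j : Fin k) : ℝ :=
  (t i - t j) / (x i - x j)

/-- The observed time of the event `(t m, x m)` for an observer with
velocity `v` in `ℝ^{1,1}` (up to a positive factor `γ`). -/
def obsTime1 {k : ℕ} (t x : Fin k → ℝ) (v : ℝ) (m : Fin k) : ℝ :=
  t m - v * x m

lemma mul_neg_iff_pr (y p : ℝ) (hp : 0 < p) : y * p < 0 ↔ y < 0 :=
  ⟨fun h => by nlinarith, fun h => mul_neg_of_neg_of_pos h hp⟩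

lemma mul_neg_iff_nr (y p : ℝ) (hp : p < 0) : y * p < 0 ↔ 0 < y :=
  ⟨fun h => by nlinarith, fun h => mul_neg_of_pos_of_neg h hp⟩

lemma critVel_symm {k : ℕ} (t x : Fin k → ℝ) (a b : Fin k) :
    critVel t x a b = critVel t x b a := by
  unfold critVel
  rw [← neg_sub (t b), ← neg_sub (x b), neg_div_neg_eq]

lemma obs_diff {k : ℕ} (t x : Fin k → ℝ) (a b : Fin k) (hxab : x a ≠ x b) (w : ℝ) :
    obsTime1 t x w a - obsTime1 t x w b = (x a - x b) * (critVel t x a b - w) := by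
  have h : x a - x b ≠ 0 := sub_ne_zero.mpr hxab
  unfold obsTime1 critVel
  field_simp
  ring


/-- When exactly one critical velocity `v_{ij}` lies between the velocities
`v < v'` (neither of which is critical), the observed orders at `v` and at `v'`
are linear orders that agree except that the positions of `i` and `j` are
interchanged, and `i`, `j` occupy adjacent positions in both orders. -/
theorem crossing_one_critical_velocity_swaps_adjacent
    (k : ℕ) (t x : Fin k → ℝ)
    (hsep : ∀ a b : Fin k, a ≠ b → (t a - t b) ^ 2 < (x a - x b) ^ 2)
    (hx : ∀ a b : Fin k, a ≠ b → x a ≠ x b)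
    (hdist : ∀ a b c d : Fin k, a ≠ b → c ≠ d →
      critVel t x a b = critVel t x c d → (a = c ∧ b = d) ∨ (a = d ∧ b = c))
    (v v' : ℝ) (hv : -1 < v) (hvv' : v < v') (hv' : v' < 1)
    (hnc : ∀ r s : Fin k, r ≠ s → v ≠ critVel t x r s ∧ v' ≠ critVel t x r s)
    (i j : Fin k) (hij : i ≠ j)
    (hin : v < critVel t x i j ∧ critVel t x i j < v')
    (huniq : ∀ r s : Fin k, r ≠ s → v < critVel t x r s → critVel t x r s < v' →
      (r = i ∧ s = j) ∨ (r = j ∧ s = i)) :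
    -- both observed orders are linear orders (all observed times distinct)
    (∀ a b : Fin k, a ≠ b → obsTime1 t x v a ≠ obsTime1 t x v b) ∧
    (∀ a b : Fin k, a ≠ b → obsTime1 t x v' a ≠ obsTime1 t x v' b) ∧
    -- all pairs other than {i, j} keep their relative order
    (∀ a b : Fin k, ¬(a = i ∧ b = j) → ¬(a = j ∧ b = i) →
      (obsTime1 t x v a < obsTime1 t x v b ↔
        obsTime1 t x v' a < obsTime1 t x v' b)) ∧
    -- the pair {i, j} interchanges its relative order
    (obsTime1 t x v i < obsTime1 t x v j ↔
      obsTime1 t x v' j < obsTime1 t x v' i) ∧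
    -- `i` and `j` occupy adjacent positions in both orders
    (∀ m : Fin k, m ≠ i → m ≠ j →
      ¬(min (obsTime1 t x v i) (obsTime1 t x v j) < obsTime1 t x v m ∧
        obsTime1 t x v m < max (obsTime1 t x v i) (obsTime1 t x v j)) ∧
      ¬(min (obsTime1 t x v' i) (obsTime1 t x v' j) < obsTime1 t x v' m ∧
        obsTime1 t x v' m < max (obsTime1 t x v' i) (obsTime1 t x v' j))) := by
  have hlt : ∀ (w : ℝ) (a b : Fin k), a ≠ b →
      (obsTime1 t x w a < obsTime1 t x w b ↔
        (x a - x b) * (critVel t x a b - w) < 0) := by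
    intro w a b hab
    rw [← sub_neg (a := obsTime1 t x w a), obs_diff t x a b (hx a b hab) w]
  have hne : ∀ (w : ℝ), (∀ r s : Fin k, r ≠ s → w ≠ critVel t x r s) →
      ∀ a b : Fin k, a ≠ b → obsTime1 t x w a ≠ obsTime1 t x w b := by
    intro w hw a b hab heq
    have h1 : x a - x b ≠ 0 := sub_ne_zero.mpr (hx a b hab)
    have h2 : critVel t x a b - w ≠ 0 := sub_ne_zero.mpr (Ne.symm (hw a b hab))
    have hd := obs_diff t x a b (hx a b hab) w
    rw [heq, sub_self] at hd
    exact mul_ne_zero h1 h2 hd.symm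
  have hne1 := hne v (fun r s hrs => (hnc r s hrs).1)
  have hne2 := hne v' (fun r s hrs => (hnc r s hrs).2)
  have hpres : ∀ a b : Fin k, ¬(a = i ∧ b = j) → ¬(a = j ∧ b = i) →
      (obsTime1 t x v a < obsTime1 t x v b ↔
        obsTime1 t x v' a < obsTime1 t x v' b) := by
    intro a b h1 h2
    by_cases hab : a = b
    · subst hab; simp
    set c := critVel t x a b with hc
    have hcv : c ≠ v := Ne.symm (hnc a b hab).1
    have hcv' : c ≠ v' := Ne.symm (hnc a b hab).2
    rw [hlt v a b hab, hlt v' a b hab, ← hc]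
    rcases lt_trichotomy c v with h | h | h
    · rw [mul_neg_iff_nr _ _ (by linarith : c - v < 0),
        mul_neg_iff_nr _ _ (by linarith : c - v' < 0)]
    · exact absurd h hcv
    · have hcv'lt : v' < c := by
        rcases lt_trichotomy c v' with h' | h' | h'
        · rcases huniq a b hab h h' with ⟨rfl, rfl⟩ | ⟨rfl, rfl⟩
          · exact absurd ⟨rfl, rfl⟩ h1
          · exact absurd ⟨rfl, rfl⟩ h2
        · exact absurd h' hcv'
        · exact h'
      rw [mul_neg_iff_pr _ _ (by linarith : 0 < c - v),
        mul_neg_iff_pr _ _ (by linarith : 0 < c - v')]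
  have hswap : obsTime1 t x v i < obsTime1 t x v j ↔
      obsTime1 t x v' j < obsTime1 t x v' i := by
    rw [hlt v i j hij, hlt v' j i (Ne.symm hij), critVel_symm t x j i,
      mul_neg_iff_pr _ _ (by linarith [hin.1] : 0 < critVel t x i j - v),
      mul_neg_iff_nr _ _ (by linarith [hin.2] : critVel t x i j - v' < 0)]
    constructor <;> intro h <;> linarith
  refine ⟨hne1, hne2, hpres, hswap, ?_⟩
  intro m hmi hmj
  have him : ¬(i = i ∧ m = j) := fun h => hmj h.2
  have him' : ¬(i = j ∧ m = i) := fun h => hij h.1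
  have hmj1 : ¬(m = i ∧ j = j) := fun h => hmi h.1
  have hmj2 : ¬(m = j ∧ j = i) := fun h => hmj h.1
  have hji1 : ¬(j = i ∧ m = j) := fun h => hij h.1.symm
  have hji2 : ¬(j = j ∧ m = i) := fun h => hmi h.2
  have hmi1 : ¬(m = i ∧ i = j) := fun h => hij h.2
  have hmi2 : ¬(m = j ∧ i = i) := fun h => hmj h.1
  constructor
  · rintro ⟨h1, h2⟩
    rcases lt_or_gt_of_ne (hne1 i j hij) with h | h
    · rw [min_eq_left h.le] at h1
      rw [max_eq_right h.le] at h2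
      have a1 := (hpres i m him him').mp h1
      have a2 := (hpres m j hmj1 hmj2).mp h2
      have a3 := hswap.mp h
      linarith
    · rw [min_eq_right h.le] at h1
      rw [max_eq_left h.le] at h2
      have a1 := (hpres j m hji1 hji2).mp h1
      have a2 := (hpres m i hmi1 hmi2).mp h2
      have a3 : obsTime1 t x v' i < obsTime1 t x v' j := by
        rcases lt_or_gt_of_ne (hne2 i j hij) with h' | h'
        · exact h'
        · exact absurd (hswap.mpr h') (by linarith)
      linarith
  · rintro ⟨h1, h2⟩
    rcases lt_or_gt_of_ne (hne2 i j hij) with h | h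
    · rw [min_eq_left h.le] at h1
      rw [max_eq_right h.le] at h2
      have a1 := (hpres i m him him').mpr h1
      have a2 := (hpres m j hmj1 hmj2).mpr h2
      have a3 : obsTime1 t x v j < obsTime1 t x v i := by
        rcases lt_or_gt_of_ne (hne1 i j hij) with h' | h'
        · exact absurd (hswap.mp h') (by linarith)
        · exact h'
      linarith
    · rw [min_eq_right h.le] at h1
      rw [max_eq_left h.le] at h2
      have a1 := (hpres j m hji1 hji2).mpr h1
      have a2 := (hpres m i hmi1 hmi2).mpr h2
      have a3 := hswap.mpr h
      linarith
end
end
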